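/- arXiv:1803.00730 — 5 statements merged into one kernel-verified Lean document; each statement's English description precedes it below -/
import Mathlib

section
/- Let $I, J$ be monomial ideals in $R = K[x_1,\dots,x_n]$. Then $(I : J)[i] = (I[i] : J[i])$ for each $i = 1, \dots, n$. -/
open MvPolynomial

/-- The monomial ideal generated by the monomials with exponent vectors in `S`. -/
noncomputable def monomialIdeal (K : Type*) [Field K] {n : ℕ} (S : Set (Fin n →₀ ℕ)) :
    Ideal (MvPolynomial (Fin n) K) :=
  Ideal.span ((fun d => monomial d (1 : K)) '' S)

/-- The total degree of an exponent vector. -/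
def mdeg {n : ℕ} (u : Fin n →₀ ℕ) : ℕ := u.sum fun _ e => e

/-- `I` is a monomial ideal. -/
def IsMonomialIdeal {K : Type*} [Field K] {n : ℕ} (I : Ideal (MvPolynomial (Fin n) K)) : Prop :=
  ∃ S : Set (Fin n →₀ ℕ), I = monomialIdeal K S

/-- `I` is a polymatroidal ideal: a monomial ideal generated in a single degree
satisfying the exchange property. -/
def IsPolymatroidal {K : Type*} [Field K] {n : ℕ} (I : Ideal (MvPolynomial (Fin n) K)) : Prop :=
  ∃ S : Set (Fin n →₀ ℕ), I = monomialIdeal K S ∧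
    (∃ d : ℕ, ∀ u ∈ S, mdeg u = d) ∧
    ∀ u ∈ S, ∀ v ∈ S, ∀ i : Fin n, v i < u i →
      ∃ j : Fin n, u j < v j ∧
        monomial (u - Finsupp.single i 1 + Finsupp.single j 1) (1 : K) ∈ I

/-- The graded maximal ideal `(x₁, …, xₙ)`. -/
noncomputable def maxIdl (K : Type*) [Field K] (n : ℕ) : Ideal (MvPolynomial (Fin n) K) :=
  Ideal.span (Set.range X)

/-- The saturation `I[i] = (I : xᵢ^∞)` of `I` with respect to the variable `xᵢ`. -/
noncomputable def sat {K : Type*} [Field K] {n : ℕ} (I : Ideal (MvPolynomial (Fin n) K)) (i : Fin n) :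
    Ideal (MvPolynomial (Fin n) K) :=
  ⨆ t : ℕ, I.colon ((Ideal.span {X i ^ t} : Ideal (MvPolynomial (Fin n) K)) : Set (MvPolynomial (Fin n) K))

/-- The stability index of the sets of associated primes of powers of `I`. -/
noncomputable def astab {K : Type*} [Field K] {n : ℕ}
    (I : Ideal (MvPolynomial (Fin n) K)) : ℕ :=
  sInf {k | 0 < k ∧ ∀ m, k ≤ m →
    associatedPrimes (MvPolynomial (Fin n) K) (MvPolynomial (Fin n) K ⧸ I ^ m) =
      associatedPrimes (MvPolynomial (Fin n) K) (MvPolynomial (Fin n) K ⧸ I ^ k)}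

/-- The depth of `R/I`: the longest regular sequence on `R/I` inside the maximal ideal. -/
noncomputable def depthQ {K : Type*} [Field K] {n : ℕ}
    (I : Ideal (MvPolynomial (Fin n) K)) : ℕ :=
  sSup {k | ∃ rs : List (MvPolynomial (Fin n) K), rs.length = k ∧
    (∀ r ∈ rs, r ∈ maxIdl K n) ∧
    RingTheory.Sequence.IsRegular (MvPolynomial (Fin n) K ⧸ I) rs}

/-- The stability index of the depths of powers of `I`. -/
noncomputable def dstab {K : Type*} [Field K] {n : ℕ}
    (I : Ideal (MvPolynomial (Fin n) K)) : ℕ :=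
  sInf {k | 0 < k ∧ ∀ m, k ≤ m → depthQ (I ^ m) = depthQ (I ^ k)}

lemma mem_sat_iff {K : Type*} [Field K] {n : ℕ} (I : Ideal (MvPolynomial (Fin n) K)) (i : Fin n)
    (f : MvPolynomial (Fin n) K) : f ∈ sat I i ↔ ∃ t : ℕ, f * X i ^ t ∈ I := by
  unfold sat
  rw [Submodule.mem_iSup_of_directed]
  · simp [Ideal.mem_colon_span_singleton]
  · apply Monotone.directed_le
    intro s t hst
    exact Submodule.colon_mono le_rfl
      (Ideal.span_singleton_le_span_singleton.2 (pow_dvd_pow _ hst))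


/-- For monomial ideals `I, J`, one has `(I : J)[i] = (I[i] : J[i])`,
where `L[i] = (L : xᵢ^∞)` denotes saturation with respect to `xᵢ`. -/
theorem stmt3 {K : Type*} [Field K] {n : ℕ} (I J : Ideal (MvPolynomial (Fin n) K))
    (hI : IsMonomialIdeal I) (hJ : IsMonomialIdeal J) (i : Fin n) :
    sat (I.colon J) i = (sat I i).colon (sat J i) := by
  ext f
  rw [mem_sat_iff]
  constructor
  · rintro ⟨t, hft⟩
    rw [Submodule.mem_colon]
    intro g hg
    rw [SetLike.mem_coe, mem_sat_iff] at hg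
    rw [mem_sat_iff]
    obtain ⟨s, hgs⟩ := hg
    refine ⟨t + s, ?_⟩
    have h1 := Submodule.mem_colon.1 hft _ hgs
    have h2 : f • g * X i ^ (t + s) = (f * X i ^ t) • (g * X i ^ s) := by
      simp only [smul_eq_mul, pow_add]; ring
    rw [h2]; exact h1
  · intro hf
    obtain ⟨F, hF⟩ := IsNoetherian.noetherian J
    have key : ∀ g ∈ F, ∃ t : ℕ, f * g * X i ^ t ∈ I := by
      intro g hg
      have hgJ : g ∈ sat J i := by
        rw [mem_sat_iff]
        exact ⟨0, by simpa using hF ▸ Ideal.subset_span hg⟩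
      have h3 := Submodule.mem_colon.1 hf g hgJ
      rw [mem_sat_iff] at h3
      simpa [smul_eq_mul] using h3
    choose t ht using key
    set T := F.attach.sup (fun g => t g.1 g.2) with hT
    refine ⟨T, ?_⟩
    rw [Submodule.mem_colon]
    intro g hg
    rw [← hF] at hg
    refine Submodule.span_induction ?_ ?_ ?_ ?_ hg
    · intro g hg
      have hle : t g hg ≤ T :=
        Finset.le_sup (f := fun g : {x // x ∈ F} => t g.1 g.2) (Finset.mem_attach F ⟨g, hg⟩)
      have heq : (f * X i ^ T) • g = f * g * X i ^ (t g hg) * X i ^ (T - t g hg) := by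
        have hpow : (X i ^ T : MvPolynomial (Fin n) K) = X i ^ (t g hg) * X i ^ (T - t g hg) := by
          rw [← pow_add, Nat.add_sub_cancel' hle]
        rw [smul_eq_mul, hpow]; ring
      rw [heq]
      exact Ideal.mul_mem_right _ _ (ht g hg)
    · simp
    · intro x y _ _ hx hy
      rw [smul_add]; exact I.add_mem hx hy
    · intro a x _ hx
      rw [smul_comm]
      exact I.smul_mem a hx
end

section
/- Let $I$ be a monomial ideal in $R=K[x_1,\dots,x_n]$ with maximal ideal $\mathfrak{m}=(x_1,\dots,x_n)$. Then for all $t \ge 1$, $\mathrm{Ass}(R/I^t) \setminus \{\mathfrak{m}\} = \bigcup_{i=1}^n \mathrm{Ass}(R/(I[i])^t)$. -/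
open MvPolynomial

section AuxLemmas

variable {K : Type*} [Field K] {n : ℕ}

lemma mem_monomialIdeal_iff {S : Set (Fin n →₀ ℕ)} {f : MvPolynomial (Fin n) K} :
    f ∈ monomialIdeal K S ↔ ∀ d ∈ f.support, ∃ u ∈ S, u ≤ d := by
  classical
  constructor
  · intro hf
    refine Submodule.span_induction ?_ ?_ ?_ ?_ hf
    · rintro _ ⟨u, hu, rfl⟩ d hd
      rw [support_monomial, if_neg one_ne_zero] at hd
      rw [Finset.mem_singleton] at hd
      exact ⟨u, hu, hd ▸ le_rfl⟩
    · simp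
    · intro a b _ _ ha hb d hd
      rcases Finset.mem_union.mp (MvPolynomial.support_add hd) with h | h
      · exact ha d h
      · exact hb d h
    · intro r a _ ha d hd
      rw [smul_eq_mul] at hd
      obtain ⟨e1, he1, e2, he2, rfl⟩ := Finset.mem_add.mp (MvPolynomial.support_mul r a hd)
      obtain ⟨u, hu, hle⟩ := ha e2 he2
      exact ⟨u, hu, hle.trans le_add_self⟩
  · intro h
    rw [MvPolynomial.as_sum f]
    apply Ideal.sum_mem
    intro d hd
    obtain ⟨u, hu, hud⟩ := h d hd
    have : monomial d (coeff d f) = monomial (d - u) (coeff d f) * monomial u 1 := by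
      rw [monomial_mul, mul_one, tsub_add_cancel_of_le hud]
    rw [this]
    exact Ideal.mul_mem_left _ _ (Ideal.subset_span ⟨u, hu, rfl⟩)

lemma monomialIdeal_mul (S T : Set (Fin n →₀ ℕ)) :
    monomialIdeal K S * monomialIdeal K T = monomialIdeal (K := K) (Set.image2 (· + ·) S T) := by
  unfold monomialIdeal
  rw [Ideal.span_mul_span']
  congr 1
  ext f
  constructor
  · rintro ⟨_, ⟨u, hu, rfl⟩, _, ⟨v, hv, rfl⟩, rfl⟩
    exact ⟨u + v, ⟨u, hu, v, hv, rfl⟩, by simp [monomial_mul]⟩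
  · rintro ⟨_, ⟨u, hu, v, hv, rfl⟩, rfl⟩
    exact ⟨monomial u 1, ⟨u, hu, rfl⟩, monomial v 1, ⟨v, hv, rfl⟩, by simp [monomial_mul]⟩

lemma monomialIdeal_pow (S : Set (Fin n →₀ ℕ)) {i : Fin n} (hS : ∀ u ∈ S, u i = 0) :
    ∀ t : ℕ, ∃ T : Set (Fin n →₀ ℕ), (∀ u ∈ T, u i = 0) ∧
      monomialIdeal K S ^ (t + 1) = monomialIdeal K T := by
  intro t
  induction t with
  | zero => exact ⟨S, hS, by rw [pow_one]⟩
  | succ t ih =>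
    obtain ⟨T, hT, hTe⟩ := ih
    refine ⟨Set.image2 (· + ·) T S, ?_, ?_⟩
    · rintro _ ⟨u, hu, v, hv, rfl⟩
      simp [hT u hu, hS v hv]
    · rw [pow_succ, hTe, monomialIdeal_mul]

lemma mem_sat {I : Ideal (MvPolynomial (Fin n) K)} {i : Fin n} {f : MvPolynomial (Fin n) K} :
    f ∈ sat I i ↔ ∃ k, X i ^ k * f ∈ I := by
  unfold sat
  have hmono : Monotone fun k : ℕ => I.colon ((Ideal.span {X i ^ k} : Ideal (MvPolynomial (Fin n) K)) : Set (MvPolynomial (Fin n) K)) := by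
    intro a b hab
    intro r hr
    rw [Ideal.mem_colon_span_singleton] at hr ⊢
    have : r * X i ^ b = X i ^ (b - a) * (r * X i ^ a) := by
      rw [mul_comm r (X i ^ a), ← mul_assoc, ← pow_add, mul_comm]
      congr 2
      omega
    rw [this]
    exact Ideal.mul_mem_left _ _ hr
  rw [Submodule.mem_iSup_of_directed _ hmono.directed_le]
  simp only [Ideal.mem_colon_span_singleton]
  constructor
  · rintro ⟨k, hk⟩; exact ⟨k, by rwa [mul_comm]⟩
  · rintro ⟨k, hk⟩; exact ⟨k, by rwa [mul_comm]⟩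

lemma self_le_sat (I : Ideal (MvPolynomial (Fin n) K)) (i : Fin n) : I ≤ sat I i := by
  intro r hr
  rw [mem_sat]
  exact ⟨0, by simpa using hr⟩

lemma sat_monomialIdeal (S : Set (Fin n →₀ ℕ)) (i : Fin n) :
    sat (monomialIdeal K S) i = monomialIdeal K (Finsupp.erase i '' S) := by
  apply le_antisymm
  · intro f hf
    obtain ⟨k, hk⟩ := mem_sat.mp hf
    rw [mem_monomialIdeal_iff] at hk ⊢
    intro d hd
    have hcd : coeff (Finsupp.single i k + d) (X i ^ k * f) = coeff d f := by
      rw [X_pow_eq_monomial, coeff_monomial_mul, one_mul]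
    have hmem : (Finsupp.single i k + d) ∈ (X i ^ k * f).support := by
      rw [mem_support_iff, hcd]; exact mem_support_iff.mp hd
    obtain ⟨u, hu, hle⟩ := hk _ hmem
    refine ⟨u.erase i, ⟨u, hu, rfl⟩, ?_⟩
    rw [Finsupp.le_def]
    intro j
    rcases eq_or_ne j i with rfl | hji
    · simp
    · rw [Finsupp.erase_ne hji]
      have h2 := Finsupp.le_def.mp hle j
      rw [Finsupp.add_apply, Finsupp.single_apply, if_neg (fun h => hji h.symm), zero_add] at h2
      exact h2
  · rw [monomialIdeal, Ideal.span_le]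
    rintro _ ⟨_, ⟨u, hu, rfl⟩, rfl⟩
    rw [SetLike.mem_coe, mem_sat]
    refine ⟨u i, ?_⟩
    rw [X_pow_eq_monomial, monomial_mul, one_mul, Finsupp.single_add_erase]
    exact Ideal.subset_span ⟨u, hu, rfl⟩

lemma monomialIdeal_saturated {T : Set (Fin n →₀ ℕ)} {i : Fin n} (hT : ∀ u ∈ T, u i = 0)
    {k : ℕ} {g : MvPolynomial (Fin n) K} (h : X i ^ k * g ∈ monomialIdeal K T) :
    g ∈ monomialIdeal K T := by
  rw [mem_monomialIdeal_iff] at h ⊢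
  intro d hd
  have hcd : coeff (Finsupp.single i k + d) (X i ^ k * g) = coeff d g := by
    rw [X_pow_eq_monomial, coeff_monomial_mul, one_mul]
  have hmem : (Finsupp.single i k + d) ∈ (X i ^ k * g).support := by
    rw [mem_support_iff, hcd]; exact mem_support_iff.mp hd
  obtain ⟨u, hu, hle⟩ := h _ hmem
  refine ⟨u, hu, ?_⟩
  rw [Finsupp.le_def]
  intro j
  rcases eq_or_ne j i with rfl | hji
  · rw [hT u hu]; exact Nat.zero_le _
  · have h2 := Finsupp.le_def.mp hle j
    rw [Finsupp.add_apply, Finsupp.single_apply, if_neg (fun h => hji h.symm), zero_add] at h2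
    exact h2

lemma finset_uniform (I : Ideal (MvPolynomial (Fin n) K)) (i : Fin n)
    (s : Finset (MvPolynomial (Fin n) K))
    (h : ∀ g ∈ s, ∃ k, X i ^ k * g ∈ I) : ∃ k, ∀ g ∈ s, X i ^ k * g ∈ I := by
  classical
  induction s using Finset.induction_on with
  | empty => exact ⟨0, by simp⟩
  | @insert a s ha ih =>
    obtain ⟨k1, hk1⟩ := h a (Finset.mem_insert_self a s)
    obtain ⟨k2, hk2⟩ := ih (fun g hg => h g (Finset.mem_insert_of_mem hg))
    refine ⟨max k1 k2, ?_⟩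
    intro g hg
    have key : ∀ (m m' : ℕ) (g : MvPolynomial (Fin n) K),
        m ≤ m' → X i ^ m * g ∈ I → X i ^ m' * g ∈ I := by
      intro m m' g hm hmem
      have : X i ^ m' * g = X i ^ (m' - m) * (X i ^ m * g) := by
        rw [← mul_assoc, ← pow_add]; congr 2; omega
      rw [this]; exact Ideal.mul_mem_left _ _ hmem
    rcases Finset.mem_insert.mp hg with rfl | hg
    · exact key k1 _ g (le_max_left _ _) hk1
    · exact key k2 _ g (le_max_right _ _) (hk2 g hg)

lemma ideal_pow_mono {A B : Ideal (MvPolynomial (Fin n) K)} (h : A ≤ B) (t : ℕ) :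
    A ^ t ≤ B ^ t := by
  induction t with
  | zero => simp
  | succ m ih => rw [pow_succ, pow_succ]; exact Ideal.mul_mono ih h

lemma exists_pow_mul_mem (I : Ideal (MvPolynomial (Fin n) K)) (i : Fin n) (t : ℕ) :
    ∃ k : ℕ, ∀ f ∈ (sat I i) ^ t, X i ^ k * f ∈ I ^ t := by
  obtain ⟨s, hs⟩ := IsNoetherian.noetherian (sat I i)
  have hmem : ∀ g ∈ s, ∃ k, X i ^ k * g ∈ I := by
    intro g hg
    exact mem_sat.mp (hs ▸ Ideal.subset_span hg)
  obtain ⟨k0, hk0⟩ := finset_uniform I i s hmem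
  have hcol : sat I i ≤ I.colon ((Ideal.span {X i ^ k0} : Ideal (MvPolynomial (Fin n) K)) : Set (MvPolynomial (Fin n) K)) := by
    rw [← hs, Submodule.span_le]
    intro g hg
    rw [SetLike.mem_coe, Ideal.mem_colon_span_singleton, mul_comm]
    exact hk0 g hg
  have h1 : Ideal.span {X i ^ k0} * I.colon ((Ideal.span {X i ^ k0} : Ideal (MvPolynomial (Fin n) K)) : Set (MvPolynomial (Fin n) K)) ≤ I := by
    rw [Ideal.mul_le]
    intro r hr g hg
    obtain ⟨c, rfl⟩ := Ideal.mem_span_singleton'.mp hr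
    rw [mul_assoc]
    exact Ideal.mul_mem_left _ _ (by rw [mul_comm]; exact Ideal.mem_colon_span_singleton.mp hg)
  have hpow : ∀ (A B : Ideal (MvPolynomial (Fin n) K)), A ≤ B → A ^ t ≤ B ^ t :=
    fun A B hAB => ideal_pow_mono hAB t
  refine ⟨k0 * t, fun f hf => ?_⟩
  have h3 : (X i ^ (k0 * t) : MvPolynomial (Fin n) K) ∈
      (Ideal.span {(X i ^ k0 : MvPolynomial (Fin n) K)}) ^ t := by
    rw [pow_mul (X i) k0 t]
    exact Ideal.pow_mem_pow (Ideal.mem_span_singleton_self (X i ^ k0)) t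
  have h4 := Ideal.mul_mem_mul h3 (hpow _ _ hcol hf)
  rw [← mul_pow] at h4
  exact hpow _ _ h1 h4

lemma ann_quotient (N : Ideal (MvPolynomial (Fin n) K)) (f : MvPolynomial (Fin n) K) :
    (Submodule.span (MvPolynomial (Fin n) K)
      {(Ideal.Quotient.mk N f : MvPolynomial (Fin n) K ⧸ N)}).annihilator
      = N.colon (Ideal.span {f}) := by
  ext r
  rw [Submodule.mem_annihilator_span_singleton, Ideal.mem_colon_span_singleton]
  have h : r • (Ideal.Quotient.mk N f) = Ideal.Quotient.mk N (r * f) := rfl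
  rw [h, Ideal.Quotient.eq_zero_iff_mem]

lemma mem_ass_iff {N P : Ideal (MvPolynomial (Fin n) K)} :
    P ∈ associatedPrimes (MvPolynomial (Fin n) K) (MvPolynomial (Fin n) K ⧸ N) ↔
      P.IsPrime ∧ ∃ f : MvPolynomial (Fin n) K, P = N.colon (Ideal.span {f}) := by
  constructor
  · intro hP
    obtain ⟨hp, x, hx⟩ := isAssociatedPrime_iff.mp hP
    obtain ⟨f, rfl⟩ := Ideal.Quotient.mk_surjective x
    exact ⟨hp, f, by rw [hx, ← ann_quotient N f]; ext r; rw [Submodule.mem_colon_singleton, Submodule.mem_annihilator_span_singleton, Submodule.mem_bot]⟩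
  · rintro ⟨hp, f, hPf⟩
    exact isAssociatedPrime_iff.mpr ⟨hp, Ideal.Quotient.mk N f, by rw [hPf, ← ann_quotient N f]; ext r; rw [Submodule.mem_colon_singleton, Submodule.mem_annihilator_span_singleton, Submodule.mem_bot]⟩

lemma maxIdl_eq_ker :
    maxIdl K n = RingHom.ker (constantCoeff : MvPolynomial (Fin n) K →+* K) := by
  apply le_antisymm
  · rw [maxIdl, Ideal.span_le]
    rintro _ ⟨i, rfl⟩
    simp [RingHom.mem_ker]
  · intro f hf
    rw [RingHom.mem_ker, constantCoeff_eq] at hf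
    rw [maxIdl]
    nth_rewrite 1 [MvPolynomial.as_sum f]
    apply Ideal.sum_mem
    intro d hd
    have hd0 : d ≠ 0 := by
      rintro rfl
      exact (mem_support_iff.mp hd) hf
    obtain ⟨i, hi⟩ := Finsupp.ne_iff.mp hd0
    rw [Finsupp.coe_zero, Pi.zero_apply] at hi
    have hle : Finsupp.single i 1 ≤ d := by
      rw [Finsupp.single_le_iff]
      omega
    have : monomial d (coeff d f) = X i * monomial (d - Finsupp.single i 1) (coeff d f) := by
      rw [X, monomial_mul, one_mul, add_tsub_cancel_of_le hle]
    rw [this]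
    exact Ideal.mul_mem_right _ _ (Ideal.subset_span ⟨i, rfl⟩)

lemma maxIdl_isMaximal : (maxIdl K n).IsMaximal := by
  rw [maxIdl_eq_ker]
  exact RingHom.ker_isMaximal_of_surjective _ (fun k => ⟨C k, constantCoeff_C (σ := Fin n) k⟩)

lemma X_mem_maxIdl (i : Fin n) : X i ∈ maxIdl K n :=
  Ideal.subset_span ⟨i, rfl⟩

end AuxLemmas

/-- For a monomial ideal `I` and all `t ≥ 1`,
`Ass(R/Iᵗ) \ {𝔪} = ⋃ᵢ Ass(R/(I[i])ᵗ)`, where `I[i]` is the saturation of `I` at `xᵢ`. -/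
theorem stmt5 {K : Type*} [Field K] {n : ℕ} (I : Ideal (MvPolynomial (Fin n) K))
    (hI : IsMonomialIdeal I) :
    ∀ t : ℕ, 1 ≤ t →
      associatedPrimes (MvPolynomial (Fin n) K) (MvPolynomial (Fin n) K ⧸ I ^ t) \ {maxIdl K n} =
        ⋃ i : Fin n,
          associatedPrimes (MvPolynomial (Fin n) K) (MvPolynomial (Fin n) K ⧸ (sat I i) ^ t) := by
  obtain ⟨S, rfl⟩ := hI
  intro t ht
  ext P
  simp only [Set.mem_diff, Set.mem_singleton_iff, Set.mem_iUnion]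
  constructor
  · rintro ⟨hP, hPm⟩
    obtain ⟨hprime, f, hPf⟩ := mem_ass_iff.mp hP
    have hex : ∃ i : Fin n, X i ∉ P := by
      by_contra hcon
      push_neg at hcon
      have hle : maxIdl K n ≤ P := by
        rw [maxIdl, Ideal.span_le]
        rintro _ ⟨i, rfl⟩
        exact hcon i
      exact hPm (maxIdl_isMaximal.eq_of_le hprime.ne_top hle).symm
    obtain ⟨i, hi⟩ := hex
    obtain ⟨k, hk⟩ := exists_pow_mul_mem (monomialIdeal K S) i t
    refine ⟨i, mem_ass_iff.mpr ⟨hprime, f, ?_⟩⟩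
    apply le_antisymm
    · intro p hp
      rw [Ideal.mem_colon_span_singleton]
      have hpf : p * f ∈ (monomialIdeal K S) ^ t := by
        rw [hPf] at hp
        exact Ideal.mem_colon_span_singleton.mp hp
      exact ideal_pow_mono (self_le_sat _ i) t hpf
    · intro g hg
      rw [Ideal.mem_colon_span_singleton] at hg
      have h1 := hk _ hg
      have h2 : X i ^ k * g ∈ P := by
        rw [hPf, Ideal.mem_colon_span_singleton, mul_assoc]
        exact h1
      rcases hprime.mem_or_mem h2 with h3 | h3
      · exact absurd (hprime.mem_of_pow_mem _ h3) hi
      · exact h3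
  · rintro ⟨i, hP⟩
    obtain ⟨hprime, f, hPf⟩ := mem_ass_iff.mp hP
    set J := (sat (monomialIdeal K S) i) ^ t with hJ
    have hsatJ : ∀ g : MvPolynomial (Fin n) K, ∀ k : ℕ, X i ^ k * g ∈ J → g ∈ J := by
      obtain ⟨T, hT0, hTeq⟩ := monomialIdeal_pow (K := K) (Finsupp.erase i '' S)
        (by rintro _ ⟨u, hu, rfl⟩; exact Finsupp.erase_same) (t - 1)
      have ht1 : t - 1 + 1 = t := by omega
      rw [ht1] at hTeq
      intro g k hg
      rw [hJ, sat_monomialIdeal, hTeq] at hg ⊢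
      exact monomialIdeal_saturated hT0 hg
    have hxi : X i ∉ P := by
      intro hx
      have h1 : X i ^ 1 * f ∈ J := by
        rw [pow_one]
        exact Ideal.mem_colon_span_singleton.mp (hPf ▸ hx)
      have h2 : f ∈ J := hsatJ f 1 h1
      have h3 : (1 : MvPolynomial (Fin n) K) ∈ P := by
        rw [hPf, Ideal.mem_colon_span_singleton, one_mul]
        exact h2
      exact hprime.ne_top ((Ideal.eq_top_iff_one P).mpr h3)
    obtain ⟨k, hk⟩ := exists_pow_mul_mem (monomialIdeal K S) i t
    refine ⟨mem_ass_iff.mpr ⟨hprime, X i ^ k * f, ?_⟩, ?_⟩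
    · apply le_antisymm
      · intro p hp
        rw [Ideal.mem_colon_span_singleton]
        have hpf : p * f ∈ J := by
          rw [hPf] at hp
          exact Ideal.mem_colon_span_singleton.mp hp
        have h1 := hk _ hpf
        rw [show p * (X i ^ k * f) = X i ^ k * (p * f) by ring]
        exact h1
      · intro g hg
        rw [Ideal.mem_colon_span_singleton] at hg
        have h1 : g * (X i ^ k * f) ∈ J := ideal_pow_mono (self_le_sat _ i) t hg
        have h2 : g * X i ^ k ∈ P := by
          rw [hPf, Ideal.mem_colon_span_singleton,
            show g * X i ^ k * f = g * (X i ^ k * f) by ring]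
          exact h1
        rcases hprime.mem_or_mem h2 with h3 | h3
        · exact h3
        · exact absurd (hprime.mem_of_pow_mem _ h3) hxi
    · intro hPm
      exact hxi (hPm.symm ▸ X_mem_maxIdl i)
end

section
/- Let $I$ be a polymatroidal ideal in $R=K[x_1,\dots,x_n]$ and suppose $\mathfrak{m}=(x_1,\dots,x_n)$ belongs to the stable set of associated primes $\mathrm{Ass}^\infty(I)$. Then $\mathrm{dstab}(I) \le \mathrm{astab}(I)$. In particular, if $\mathrm{astab}(I)=1$ then $\mathrm{dstab}(I)=1$. -/
open MvPolynomial

/-- If the maximal ideal is an associated prime of `R/J`, then `depthQ J = 0`. -/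
lemma depthQ_eq_zero_of_max_assoc {K : Type*} [Field K] {n : ℕ}
    (J : Ideal (MvPolynomial (Fin n) K))
    (h : maxIdl K n ∈
      associatedPrimes (MvPolynomial (Fin n) K) (MvPolynomial (Fin n) K ⧸ J)) :
    depthQ J = 0 := by
  obtain ⟨hp, x, hx⟩ := h
  have hxne : x ≠ 0 := by
    rintro rfl
    apply hp.ne_top
    rw [hx, Ideal.radical_eq_top, Ideal.eq_top_iff_one, Submodule.mem_colon_singleton, smul_zero]
    exact Submodule.zero_mem _
  have hzero : ∀ k ∈ {k | ∃ rs : List (MvPolynomial (Fin n) K), rs.length = k ∧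
      (∀ r ∈ rs, r ∈ maxIdl K n) ∧
      RingTheory.Sequence.IsRegular (MvPolynomial (Fin n) K ⧸ J) rs}, k = 0 := by
    rintro k ⟨rs, hlen, hmem, hreg⟩
    by_contra hk
    have : rs ≠ [] := by
      intro h; rw [h] at hlen; exact hk hlen.symm
    obtain ⟨r, tl, rfl⟩ := List.exists_cons_of_ne_nil this
    have hr : IsSMulRegular (MvPolynomial (Fin n) K ⧸ J) r :=
      ((RingTheory.Sequence.isRegular_cons_iff _ r tl).mp hreg).1
    have hrm : r ∈ maxIdl K n := hmem r List.mem_cons_self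
    rw [hx] at hrm
    obtain ⟨e, he⟩ := hrm
    have hrx : r ^ e • x = 0 := by
      rw [Submodule.mem_colon_singleton, Submodule.mem_bot] at he
      exact he
    exact hxne ((hr.pow e) (show r ^ e • x = r ^ e • 0 by rw [hrx, smul_zero]))
  unfold depthQ
  rcases Set.eq_empty_or_nonempty {k | ∃ rs : List (MvPolynomial (Fin n) K),
      rs.length = k ∧ (∀ r ∈ rs, r ∈ maxIdl K n) ∧
      RingTheory.Sequence.IsRegular (MvPolynomial (Fin n) K ⧸ J) rs} with he | hne
  · rw [he]; exact csSup_empty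
  · exact Nat.le_zero.mp (csSup_le hne fun k hk => Nat.le_zero.mpr (hzero k hk))

/-- For a polymatroidal ideal `I` with `𝔪 ∈ Ass^∞(I)`, one has
`dstab(I) ≤ astab(I)`; in particular `astab(I) = 1` implies `dstab(I) = 1`. -/
theorem stmt10 {K : Type*} [Field K] {n : ℕ} (I : Ideal (MvPolynomial (Fin n) K))
    (hI : IsPolymatroidal I)
    (hm : maxIdl K n ∈
      associatedPrimes (MvPolynomial (Fin n) K) (MvPolynomial (Fin n) K ⧸ I ^ (astab I))) :
    dstab I ≤ astab I ∧ (astab I = 1 → dstab I = 1) := by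
  set R := MvPolynomial (Fin n) K
  set A := {k | 0 < k ∧ ∀ m, k ≤ m →
    associatedPrimes R (R ⧸ I ^ m) = associatedPrimes R (R ⧸ I ^ k)} with hA
  have hAne : A.Nonempty := by
    by_contra hA0
    rw [Set.not_nonempty_iff_eq_empty] at hA0
    have h0 : astab I = 0 := by
      unfold astab; rw [← hA, hA0]; exact Nat.sInf_empty
    rw [h0] at hm
    have : Subsingleton (R ⧸ I ^ 0) := by
      rw [pow_zero, Ideal.one_eq_top]
      exact Ideal.Quotient.subsingleton_iff.mpr rfl
    rw [associatedPrimes.eq_empty_of_subsingleton] at hm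
    exact hm
  have hmem : astab I ∈ A := Nat.sInf_mem hAne
  obtain ⟨hpos, hstab⟩ := hmem
  have hdep : ∀ m, astab I ≤ m → depthQ (I ^ m) = depthQ (I ^ (astab I)) := by
    intro m hle
    have h1 : maxIdl K n ∈ associatedPrimes R (R ⧸ I ^ m) := by
      rw [hstab m hle]; exact hm
    rw [depthQ_eq_zero_of_max_assoc _ h1, depthQ_eq_zero_of_max_assoc _ hm]
  have hBmem : astab I ∈ {k | 0 < k ∧ ∀ m, k ≤ m → depthQ (I ^ m) = depthQ (I ^ k)} :=
    ⟨hpos, hdep⟩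
  have hle : dstab I ≤ astab I := Nat.sInf_le hBmem
  refine ⟨hle, fun h1 => ?_⟩
  have hBne : {k | 0 < k ∧ ∀ m, k ≤ m → depthQ (I ^ m) = depthQ (I ^ k)}.Nonempty :=
    ⟨astab I, hBmem⟩
  have := (Nat.sInf_mem hBne).1
  unfold dstab at *
  omega
end

section
/- Let $n \ge 4$ and let $I$ be a full-supported matroidal ideal of degree $n-1$ in $R=K[x_1,\dots,x_n]$ with $\gcd(I)=1$. Then $I$ equals the squarefree Veronese ideal $I_{n-1;1,\dots,1}$ generated by all squarefree monomials of degree $n-1$, i.e., $I = (x_1\cdots x_n / x_i : i = 1,\dots,n)$. -/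
open MvPolynomial

/-- The exponent vector of `x₁⋯xₙ/xᵢ`. -/
noncomputable def cvec {n : ℕ} (i : Fin n) : Fin n →₀ ℕ :=
  (Finset.univ.erase i).sum fun j => Finsupp.single j 1

lemma cvec_apply {n : ℕ} (i k : Fin n) : cvec i k = if k = i then 0 else 1 := by
  classical
  simp only [cvec, Finsupp.finset_sum_apply, Finsupp.single_apply]
  rw [Finset.sum_ite_eq' (Finset.univ.erase i) k (fun _ => 1)]
  simp [Finset.mem_erase, eq_comm]

lemma monomial_sum_single {K : Type*} [Field K] {n : ℕ} (s : Finset (Fin n)) :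
    (monomial (s.sum fun j => Finsupp.single j 1) (1 : K)) = ∏ j ∈ s, X j := by
  classical
  induction s using Finset.induction_on with
  | empty => simp
  | @insert a s hx ih =>
    rw [Finset.sum_insert hx, Finset.prod_insert hx, ← ih, X, monomial_mul, one_mul]

/-- For `n ≥ 4`, a full-supported matroidal ideal of degree `n-1` with
`gcd(I) = 1` is the squarefree Veronese ideal generated by all squarefree monomials of
degree `n-1`, i.e. `I = (x₁⋯xₙ/xᵢ : i = 1, …, n)`. -/
theorem stmt13 {K : Type*} [Field K] {n : ℕ} (hn : 4 ≤ n)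
    (S : Set (Fin n →₀ ℕ)) (I : Ideal (MvPolynomial (Fin n) K))
    (hI : I = monomialIdeal K S)
    (hsqfree : ∀ u ∈ S, ∀ i : Fin n, u i ≤ 1)
    (hdeg : ∀ u ∈ S, mdeg u = n - 1)
    (hexch : ∀ u ∈ S, ∀ v ∈ S, ∀ i : Fin n, v i < u i →
      ∃ j : Fin n, u j < v j ∧
        monomial (u - Finsupp.single i 1 + Finsupp.single j 1) (1 : K) ∈ I)
    (hfull : ∀ i : Fin n, ∃ u ∈ S, u i ≠ 0)
    (hgcd : ∀ i : Fin n, ∃ u ∈ S, u i = 0) :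
    I = Ideal.span (Set.range fun i : Fin n =>
      ∏ j ∈ Finset.univ.erase i, (X j : MvPolynomial (Fin n) K)) := by
  classical
  -- each u ∈ S with u i = 0 equals cvec i
  have hsum : ∀ u ∈ S, ∑ j, u j = n - 1 := by
    intro u hu
    have := hdeg u hu
    rwa [mdeg, Finsupp.sum_fintype _ _ (fun _ => rfl)] at this
  have key : ∀ u ∈ S, ∀ i : Fin n, u i = 0 → u = cvec i := by
    intro u hu i hui
    have hsum' : ∑ j ∈ Finset.univ.erase i, u j = n - 1 := by
      have := Finset.sum_erase_add Finset.univ u (Finset.mem_univ i)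
      rw [hui, add_zero] at this
      rw [this]; exact hsum u hu
    have hall : ∀ k ∈ Finset.univ.erase i, u k = 1 := by
      by_contra h
      push_neg at h
      obtain ⟨k, hk, hk1⟩ := h
      have hlt : ∑ j ∈ Finset.univ.erase i, u j < ∑ j ∈ Finset.univ.erase i, 1 := by
        apply Finset.sum_lt_sum (fun j _ => hsqfree u hu j) ⟨k, hk, ?_⟩
        exact lt_of_le_of_ne (hsqfree u hu k) hk1
      rw [Finset.sum_const, smul_eq_mul, mul_one, Finset.card_erase_of_mem (Finset.mem_univ i),
        Finset.card_univ, Fintype.card_fin, hsum'] at hlt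
      exact lt_irrefl _ hlt
    ext k
    rw [cvec_apply]
    by_cases hk : k = i
    · simp [hk, hui]
    · simp only [hk, if_false]
      exact hall k (Finset.mem_erase.2 ⟨hk, Finset.mem_univ k⟩)
  have hS : S = Set.range cvec := by
    ext u
    constructor
    · intro hu
      have : ∑ j, u j < ∑ j : Fin n, 1 := by
        rw [hsum u hu, Finset.sum_const, smul_eq_mul, mul_one, Finset.card_univ,
          Fintype.card_fin]
        omega
      obtain ⟨i, _, hi⟩ := Finset.exists_lt_of_sum_lt this
      exact ⟨i, (key u hu i (Nat.lt_one_iff.mp hi)).symm⟩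
    · rintro ⟨i, rfl⟩
      obtain ⟨u, hu, hui⟩ := hgcd i
      rw [← key u hu i hui]; exact hu
  have hfun : ((fun d => monomial d (1 : K)) ∘ cvec) =
      fun i : Fin n => ∏ j ∈ Finset.univ.erase i, (X j : MvPolynomial (Fin n) K) := by
    funext i
    simp only [Function.comp_apply]
    rw [cvec, monomial_sum_single]
  rw [hI, monomialIdeal, hS, ← Set.range_comp, hfun]
end

section
/- Let $I$ be a polymatroidal ideal in $R=K[x_1,\dots,x_n]$ and $\alpha \in R$ a monomial. Then the colon ideal $(I : \alpha)$ is again a polymatroidal ideal. -/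
open MvPolynomial

lemma mdeg_eq_sum {n : ℕ} (u : Fin n →₀ ℕ) : mdeg u = ∑ k, u k := by
  rw [mdeg, Finsupp.sum_fintype]
  intro; rfl

lemma mdeg_add {n : ℕ} (u v : Fin n →₀ ℕ) : mdeg (u + v) = mdeg u + mdeg v := by
  simp [mdeg_eq_sum, Finset.sum_add_distrib]

lemma mdeg_single {n : ℕ} (i : Fin n) : mdeg (Finsupp.single i 1) = 1 := by
  simp [mdeg, Finsupp.sum_single_index]

lemma eq_of_le_of_mdeg_le {n : ℕ} {u v : Fin n →₀ ℕ} (h : u ≤ v) (hm : mdeg v ≤ mdeg u) :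
    u = v := by
  have hle : ∀ k, u k ≤ v k := fun k => h k
  have hsum : ∑ k, u k = ∑ k, v k :=
    le_antisymm (Finset.sum_le_sum fun k _ => hle k) (by rw [← mdeg_eq_sum, ← mdeg_eq_sum]; exact hm)
  ext k
  exact ((Finset.sum_eq_sum_iff_of_le (fun k _ => hle k)).mp hsum k (Finset.mem_univ k))

lemma mem_monomialIdeal {K : Type*} [Field K] {n : ℕ} {S : Set (Fin n →₀ ℕ)}
    {p : MvPolynomial (Fin n) K} :
    p ∈ monomialIdeal K S ↔ ∀ m ∈ p.support, ∃ u ∈ S, u ≤ m :=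
  mem_ideal_span_monomial_image

lemma monomial_mem_monomialIdeal {K : Type*} [Field K] {n : ℕ} {S : Set (Fin n →₀ ℕ)}
    {m : Fin n →₀ ℕ} :
    monomial m (1 : K) ∈ monomialIdeal K S ↔ ∃ u ∈ S, u ≤ m := by
  rw [mem_monomialIdeal]
  simp [support_monomial]

lemma mem_colon_monomialIdeal {K : Type*} [Field K] {n : ℕ} {S : Set (Fin n →₀ ℕ)}
    {p : MvPolynomial (Fin n) K} {a : Fin n →₀ ℕ} :
    p ∈ (monomialIdeal K S).colon (Ideal.span {monomial a (1 : K)}) ↔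
      ∀ m ∈ p.support, ∃ u ∈ S, u ≤ m + a := by
  rw [Ideal.mem_colon_span_singleton, mem_monomialIdeal]
  have hs : (p * monomial a (1 : K)).support = p.support.map (addRightEmbedding a) := by
    rw [← single_eq_monomial]
    exact AddMonoidAlgebra.support_coeff_mul_single p 1 (fun y => by simp) a
  rw [hs]
  simp [Finset.forall_mem_map, addRightEmbedding]

section Exchange
variable {K : Type*} [Field K] {n : ℕ} {S : Set (Fin n →₀ ℕ)} {d : ℕ}

/-- Exchange property with conclusion in `S`. -/
lemma exchange_mem_S (hd : ∀ u ∈ S, mdeg u = d)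
    (hex : ∀ u ∈ S, ∀ v ∈ S, ∀ i : Fin n, v i < u i →
      ∃ j : Fin n, u j < v j ∧
        monomial (u - Finsupp.single i 1 + Finsupp.single j 1) (1 : K) ∈ monomialIdeal K S) :
    ∀ u ∈ S, ∀ v ∈ S, ∀ i : Fin n, v i < u i →
      ∃ j : Fin n, u j < v j ∧ u - Finsupp.single i 1 + Finsupp.single j 1 ∈ S := by
  intro u hu v hv i hi
  obtain ⟨j, hj, hmem⟩ := hex u hu v hv i hi
  refine ⟨j, hj, ?_⟩
  rw [monomial_mem_monomialIdeal] at hmem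
  obtain ⟨s, hs, hsle⟩ := hmem
  have hui : Finsupp.single i 1 ≤ u := by
    rw [Finsupp.single_le_iff]; omega
  have hdeg : mdeg (u - Finsupp.single i 1 + Finsupp.single j 1) = d := by
    have h1 : (u - Finsupp.single i 1) + Finsupp.single i 1 = u := tsub_add_cancel_of_le hui
    have h2 : mdeg (u - Finsupp.single i 1) + 1 = d := by
      rw [← hd u hu]
      conv_rhs => rw [← h1]
      rw [mdeg_add, mdeg_single]
    rw [mdeg_add, mdeg_single]; omega
  have : s = u - Finsupp.single i 1 + Finsupp.single j 1 :=
    eq_of_le_of_mdeg_le hsle (by rw [hdeg, hd s hs])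
  rwa [← this]

/-- Dual exchange property: we can increase `u` at a coordinate where `v` is bigger. -/
lemma dual_exchange (hd : ∀ u ∈ S, mdeg u = d)
    (hexS : ∀ u ∈ S, ∀ v ∈ S, ∀ i : Fin n, v i < u i →
      ∃ j : Fin n, u j < v j ∧ u - Finsupp.single i 1 + Finsupp.single j 1 ∈ S) :
    ∀ u ∈ S, ∀ v ∈ S, ∀ i : Fin n, u i < v i →
      ∃ j : Fin n, v j < u j ∧ u - Finsupp.single j 1 + Finsupp.single i 1 ∈ S := by
  intro u hu v hv i hi
  -- strong induction on mdeg (v - u)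
  generalize hN : mdeg (v - u) = N
  induction N using Nat.strong_induction_on generalizing v with
  | _ N ih =>
  have hdu : mdeg u = d := hd u hu
  have hdv : mdeg v = d := hd v hv
  -- N ≥ 1
  have hN1 : 1 ≤ N := by
    rw [← hN, mdeg_eq_sum]
    calc 1 ≤ (v - u) i := by simp [Finsupp.tsub_apply]; omega
    _ ≤ _ := Finset.single_le_sum (f := fun k => (v - u) k) (fun k _ => Nat.zero_le _)
        (Finset.mem_univ i)
  -- key sum identity: ∑ (v-u) = ∑ (u-v)
  have hsum_eq : mdeg (u - v) = N := by
    have hptw : ∀ k, (u - v) k + v k = (v - u) k + u k := by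
      intro k; simp [Finsupp.tsub_apply]; omega
    have h2 : (∑ k, (u - v) k) + (∑ k, v k) = (∑ k, (v - u) k) + (∑ k, u k) := by
      rw [← Finset.sum_add_distrib, ← Finset.sum_add_distrib]
      exact Finset.sum_congr rfl fun k _ => hptw k
    have hu' : ∑ k, u k = d := by rw [← mdeg_eq_sum]; exact hdu
    have hv' : ∑ k, v k = d := by rw [← mdeg_eq_sum]; exact hdv
    have hvu' : ∑ k, (v - u) k = N := by rw [← mdeg_eq_sum]; exact hN
    rw [mdeg_eq_sum]
    omega
  rcases eq_or_lt_of_le hN1 with h1 | h2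
  · -- base case N = 1 : v = u - e_j + e_i
    -- v - u = single i 1
    have hvu : v - u = Finsupp.single i 1 := by
      refine (eq_of_le_of_mdeg_le ?_ ?_).symm
      · rw [Finsupp.single_le_iff]; simp [Finsupp.tsub_apply]; omega
      · rw [hN, ← h1, mdeg_single]
    -- u - v has mdeg 1 and we find j with (u-v) j ≥ 1
    obtain ⟨j, hj⟩ : ∃ j, 0 < (u - v) j := by
      by_contra hc
      push_neg at hc
      have : mdeg (u - v) = 0 := by
        rw [mdeg_eq_sum]
        exact Finset.sum_eq_zero fun k _ => Nat.le_zero.mp (hc k)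
      omega
    have huv : u - v = Finsupp.single j 1 := by
      refine (eq_of_le_of_mdeg_le ?_ ?_).symm
      · rw [Finsupp.single_le_iff]; omega
      · rw [hsum_eq, ← h1, mdeg_single]
    have hji : j ≠ i := by
      intro h; subst h
      have := DFunLike.congr_fun huv j
      simp [Finsupp.tsub_apply] at this
      omega
    have hvj : v j < u j := by
      have := DFunLike.congr_fun huv j
      simp [Finsupp.tsub_apply] at this
      omega
    refine ⟨j, hvj, ?_⟩
    have : u - Finsupp.single j 1 + Finsupp.single i 1 = v := by
      ext k
      have h1 := DFunLike.congr_fun huv k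
      have h2 := DFunLike.congr_fun hvu k
      simp only [Finsupp.tsub_apply, Finsupp.add_apply, Finsupp.single_apply] at h1 h2 ⊢
      by_cases hki : k = i <;> by_cases hkj : k = j <;> simp_all <;> omega
    rwa [this]
  · -- inductive step N ≥ 2: find i' to exchange at
    obtain ⟨i', hi'lt, hi'cond⟩ : ∃ i', u i' < v i' ∧ (i' = i → u i + 1 < v i) := by
      by_cases hc : u i + 1 < v i
      · exact ⟨i, hi, fun _ => hc⟩
      · -- v i = u i + 1; find i' ≠ i
        have hvi : (v - u) i = 1 := by simp [Finsupp.tsub_apply]; omega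
        obtain ⟨i', hi'ne, hi'pos⟩ : ∃ i', i' ≠ i ∧ 0 < (v - u) i' := by
          by_contra hc2
          push_neg at hc2
          have : ∑ k, (v - u) k ≤ 1 := by
            calc ∑ k, (v - u) k = ∑ k ∈ Finset.univ.erase i, (v - u) k + (v - u) i := by
                  rw [Finset.sum_erase_add]
                  exact Finset.mem_univ i
            _ ≤ 0 + 1 := by
                  refine Nat.add_le_add ?_ (le_of_eq hvi)
                  refine Nat.le_zero.mpr (Finset.sum_eq_zero fun k hk => ?_)
                  exact Nat.le_zero.mp (hc2 k (Finset.mem_erase.mp hk).1)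
            _ = 1 := by omega
          rw [← mdeg_eq_sum, hN] at this
          omega
        refine ⟨i', ?_, fun h => absurd h hi'ne⟩
        have := hi'pos; simp [Finsupp.tsub_apply] at this; omega
    -- apply exchange to (v, u) at i'
    obtain ⟨j0, hj0, hv2⟩ := hexS v hv u hu i' hi'lt
    set v2 := v - Finsupp.single i' 1 + Finsupp.single j0 1 with hv2def
    have hj0i' : j0 ≠ i' := by intro h; subst h; omega
    have hj0i : j0 ≠ i := by intro h; subst h; omega
    have hv2app : ∀ k, v2 k = v k - (if i' = k then 1 else 0) + (if j0 = k then 1 else 0) := by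
      intro k
      simp only [hv2def, Finsupp.add_apply, Finsupp.tsub_apply, Finsupp.single_apply]
    have hv2i : u i < v2 i := by
      rw [hv2app i, if_neg hj0i]
      by_cases h : i' = i
      · rw [if_pos h]
        have := hi'cond h
        omega
      · rw [if_neg h]; omega
    have hNv2 : mdeg (v2 - u) = N - 1 := by
      have hptw : ∀ k, (v2 - u) k = (v - u) k - (if i' = k then 1 else 0) := by
        intro k
        simp only [Finsupp.tsub_apply]
        rw [hv2app k]
        by_cases hk1 : i' = k
        · rw [if_pos hk1, if_neg (by rw [← hk1]; exact hj0i')]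
          subst hk1; omega
        · rw [if_neg hk1]
          by_cases hk2 : j0 = k
          · rw [if_pos hk2]; subst hk2; omega
          · rw [if_neg hk2]; omega
      have hsum2 : ∑ k, (v2 - u) k = (∑ k, (v - u) k) - 1 := by
        rw [Finset.sum_congr rfl fun k _ => hptw k,
            ← Finset.sum_erase_add _ _ (Finset.mem_univ i'),
            ← Finset.sum_erase_add _ (fun k => (v - u) k) (Finset.mem_univ i')]
        have h1 : ∑ k ∈ Finset.univ.erase i', ((v - u) k - if i' = k then 1 else 0)
            = ∑ k ∈ Finset.univ.erase i', (v - u) k := by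
          refine Finset.sum_congr rfl fun k hk => ?_
          rw [if_neg (Ne.symm (Finset.mem_erase.mp hk).1)]
          omega
        have h2 : (v - u) i' ≥ 1 := by simp [Finsupp.tsub_apply]; omega
        rw [h1, if_pos rfl]
        omega
      have hvu' : ∑ k, (v - u) k = N := by rw [← mdeg_eq_sum]; exact hN
      rw [mdeg_eq_sum]
      omega
    -- recurse
    obtain ⟨j, hjlt, hjmem⟩ := ih (N - 1) (by omega) v2 hv2 hv2i hNv2
    refine ⟨j, ?_, hjmem⟩
    have hji' : i' ≠ j := by
      intro h
      rw [hv2app j, ← h, if_pos rfl, if_neg hj0i'] at hjlt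
      omega
    have : v j ≤ v2 j := by
      rw [hv2app j, if_neg hji']
      by_cases h : j0 = j
      · rw [if_pos h]; omega
      · rw [if_neg h]; omega
    omega
end Exchange

lemma apply_le_of_le {n : ℕ} {u v : Fin n →₀ ℕ} (h : u ≤ v) (k : Fin n) : u k ≤ v k :=
  Finsupp.le_def.mp h k

lemma isPolymatroidal_colon_single {K : Type*} [Field K] {n : ℕ}
    (I : Ideal (MvPolynomial (Fin n) K)) (hI : IsPolymatroidal I) (i : Fin n) :
    IsPolymatroidal (I.colon (Ideal.span {monomial (Finsupp.single i 1) (1 : K)})) := by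
  classical
  obtain ⟨S, rfl, ⟨d, hd⟩, hex⟩ := hI
  have hexS := exchange_mem_S hd hex
  set e : Fin n →₀ ℕ := Finsupp.single i 1 with he
  have heapp : ∀ k, e k = if i = k then 1 else 0 := fun k => Finsupp.single_apply
  by_cases hcase : ∃ v ∈ S, 1 ≤ v i
  · -- Case B: some generator involves x i
    obtain ⟨v0, hv0, hv0i⟩ := hcase
    refine ⟨{t | ∃ u ∈ S, 1 ≤ u i ∧ t = u - e}, ?_, ⟨d - 1, ?_⟩, ?_⟩
    · -- ideal equality
      ext p
      rw [mem_colon_monomialIdeal, mem_monomialIdeal]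
      refine forall₂_congr fun m _ => ?_
      constructor
      · rintro ⟨u, hu, hle⟩
        by_cases hui : 1 ≤ u i
        · refine ⟨u - e, ⟨u, hu, hui, rfl⟩, ?_⟩
          intro k
          have h1 := apply_le_of_le hle k
          rw [Finsupp.tsub_apply]
          rw [Finsupp.add_apply, heapp k] at h1
          rw [heapp k]
          split_ifs at h1 ⊢ <;> omega
        · -- u i = 0 : use dual exchange with v0
          obtain ⟨j, hj, hu'⟩ := dual_exchange hd hexS u hu v0 hv0 i (by omega)
          set u' := u - Finsupp.single j 1 + e with hu'def
          have hji : j ≠ i := by intro h; subst h; omega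
          have hu'i : 1 ≤ u' i := by
            rw [hu'def, Finsupp.add_apply, heapp i, if_pos rfl]
            omega
          refine ⟨u' - e, ⟨u', hu', hu'i, rfl⟩, ?_⟩
          have : u' - e = u - Finsupp.single j 1 := by
            rw [hu'def, add_tsub_cancel_right]
          rw [this]
          intro k
          have h1 := apply_le_of_le hle k
          rw [Finsupp.add_apply, heapp k] at h1
          rw [Finsupp.tsub_apply]
          have h2 : u i = 0 := by omega
          split_ifs at h1 with h3
          · subst h3; omega
          · omega
      · rintro ⟨t, ⟨u, hu, hui, rfl⟩, hle⟩
        refine ⟨u, hu, ?_⟩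
        intro k
        have h1 := apply_le_of_le hle k
        rw [Finsupp.tsub_apply, heapp k] at h1
        rw [Finsupp.add_apply, heapp k]
        split_ifs at h1 ⊢ <;> omega
    · -- degrees
      rintro t ⟨u, hu, hui, rfl⟩
      have h1 : (u - e) + e = u := tsub_add_cancel_of_le (Finsupp.single_le_iff.mpr hui)
      have h2 : mdeg (u - e) + 1 = d := by
        rw [← hd u hu, ← mdeg_single i, ← he, ← mdeg_add, h1]
      omega
    · -- exchange property
      rintro s ⟨u, hu, hui, rfl⟩ t ⟨v, hv, hvi, rfl⟩ k hk
      have hkuv : ∀ k', (u - e) k' = u k' - (if i = k' then 1 else 0) := by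
        intro k'; rw [Finsupp.tsub_apply, heapp k']
      have heu : e ≤ u := Finsupp.single_le_iff.mpr hui
      by_cases hki : k = i
      · -- k = i : v i < u i (strictly), so u i ≥ 2
        subst hki
        have huk2 : 2 ≤ u k := by
          have h1 := hkuv k; have h2 : (v - e) k = v k - 1 := by
            rw [Finsupp.tsub_apply, heapp k, if_pos rfl]
          rw [h1, if_pos rfl, h2] at hk
          omega
        have hvu : v k < u k := by
          have h1 := hkuv k; have h2 : (v - e) k = v k - 1 := by
            rw [Finsupp.tsub_apply, heapp k, if_pos rfl]
          rw [h1, if_pos rfl, h2] at hk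
          omega
        obtain ⟨j0, hj0, hmem⟩ := hexS u hu v hv k hvu
        have hj0k : j0 ≠ k := by intro h; subst h; omega
        refine ⟨j0, ?_, ?_⟩
        · rw [hkuv j0, if_neg (fun h => hj0k h.symm), Finsupp.tsub_apply, heapp j0,
            if_neg (fun h => hj0k h.symm)]
          omega
        · rw [mem_colon_monomialIdeal]
          intro m hm
          rw [support_monomial, if_neg (one_ne_zero)] at hm
          rw [Finset.mem_singleton] at hm
          subst hm
          refine ⟨u - e + Finsupp.single j0 1, hmem, le_of_eq ?_⟩
          -- (u - e - e + e_{j0}) + e = u - e + e_{j0}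
          have hee : e ≤ u - e := by
            rw [Finsupp.single_le_iff, Finsupp.tsub_apply, heapp k, if_pos rfl]
            omega
          rw [add_right_comm, tsub_add_cancel_of_le hee]
      · -- k ≠ i : u k > v k
        have hvu : v k < u k := by
          have h1 := hkuv k
          have h2 : (v - e) k = v k - (if i = k then 1 else 0) := by
            rw [Finsupp.tsub_apply, heapp k]
          rw [h1, h2, if_neg (fun h => hki h.symm)] at hk
          exact hk
        obtain ⟨j0, hj0, hmem⟩ := hexS u hu v hv k hvu
        have hkek : Finsupp.single k 1 ≤ u := Finsupp.single_le_iff.mpr (by omega)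
        have hsub_comm : (u - e) - Finsupp.single k 1 = (u - Finsupp.single k 1) - e := by
          rw [tsub_tsub, tsub_tsub, add_comm]
        have hee : e ≤ u - Finsupp.single k 1 := by
          rw [Finsupp.single_le_iff, Finsupp.tsub_apply, Finsupp.single_apply,
            if_neg hki]
          omega
        by_cases hj0i : j0 = i
        · -- exchange j0 = i : take j := i
          subst hj0i
          refine ⟨j0, ?_, ?_⟩
          · rw [hkuv j0, if_pos rfl, Finsupp.tsub_apply, heapp j0, if_pos rfl]
            omega
          · rw [mem_colon_monomialIdeal]
            intro m hm
            rw [support_monomial, if_neg (one_ne_zero)] at hm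
            rw [Finset.mem_singleton] at hm
            subst hm
            refine ⟨u - Finsupp.single k 1 + Finsupp.single j0 1, hmem, le_of_eq ?_⟩
            rw [hsub_comm, add_right_comm, tsub_add_cancel_of_le hee]
        · refine ⟨j0, ?_, ?_⟩
          · rw [hkuv j0, if_neg (fun h => hj0i h.symm), Finsupp.tsub_apply, heapp j0,
              if_neg (fun h => hj0i h.symm)]
            omega
          · rw [mem_colon_monomialIdeal]
            intro m hm
            rw [support_monomial, if_neg (one_ne_zero)] at hm
            rw [Finset.mem_singleton] at hm
            subst hm
            refine ⟨u - Finsupp.single k 1 + Finsupp.single j0 1, hmem, le_of_eq ?_⟩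
            rw [hsub_comm, add_right_comm, tsub_add_cancel_of_le hee]
  · -- Case A: no generator involves x i, colon equals the ideal itself
    push_neg at hcase
    refine ⟨S, ?_, ⟨d, hd⟩, ?_⟩
    · ext p
      rw [mem_colon_monomialIdeal, mem_monomialIdeal]
      refine forall₂_congr fun m _ => ?_
      constructor
      · rintro ⟨u, hu, hle⟩
        refine ⟨u, hu, fun k => ?_⟩
        have h1 := apply_le_of_le hle k
        have h2 := hcase u hu
        rw [Finsupp.add_apply, heapp k] at h1
        split_ifs at h1 with h3
        · subst h3; omega
        · omega
      · rintro ⟨u, hu, hle⟩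
        exact ⟨u, hu, le_trans hle (by intro k; rw [Finsupp.add_apply]; omega)⟩
    · intro u hu v hv k hk
      obtain ⟨j, hj, hmem⟩ := hex u hu v hv k hk
      exact ⟨j, hj, Ideal.mem_colon_span_singleton.mpr (Ideal.mul_mem_right _ _ hmem)⟩

lemma colon_mul_singleton {K : Type*} [Field K] {n : ℕ} (I : Ideal (MvPolynomial (Fin n) K))
    (x y : MvPolynomial (Fin n) K) :
    I.colon (Ideal.span {x * y}) = (I.colon (Ideal.span {x})).colon (Ideal.span {y}) := by
  ext r
  rw [Ideal.mem_colon_span_singleton, Ideal.mem_colon_span_singleton, Ideal.mem_colon_span_singleton,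
    show r * (x * y) = r * y * x by ring]

/-- For a polymatroidal ideal `I` and a monomial `α`, the colon ideal
`(I : α)` is again polymatroidal. -/
theorem stmt17 {K : Type*} [Field K] {n : ℕ} (I : Ideal (MvPolynomial (Fin n) K))
    (hI : IsPolymatroidal I) (a : Fin n →₀ ℕ) :
    IsPolymatroidal (I.colon (Ideal.span {monomial a (1 : K)})) := by
  suffices H : ∀ N (a : Fin n →₀ ℕ), mdeg a = N → ∀ I : Ideal (MvPolynomial (Fin n) K),
      IsPolymatroidal I → IsPolymatroidal (I.colon (Ideal.span {monomial a (1 : K)})) from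
    H _ a rfl I hI
  intro N
  induction N using Nat.strong_induction_on with
  | _ N ih =>
    intro a ha I hI
    by_cases h0 : a = 0
    · subst h0
      have h1 : (monomial (0 : Fin n →₀ ℕ) (1 : K)) = 1 := by
        simp [monomial_zero']
      have : I.colon (Ideal.span {monomial (0 : Fin n →₀ ℕ) (1 : K)}) = I := by
        ext r
        rw [Ideal.mem_colon_span_singleton, h1, mul_one]
      rwa [this]
    · obtain ⟨i, hi⟩ : ∃ i, 1 ≤ a i := by
        by_contra hc
        push_neg at hc
        exact h0 (Finsupp.ext fun k => by have := hc k; simp only [Finsupp.coe_zero, Pi.zero_apply]; omega)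
      have hle : Finsupp.single i 1 ≤ a := Finsupp.single_le_iff.mpr hi
      have hsplit : (monomial a (1 : K)) =
          monomial (Finsupp.single i 1) 1 * monomial (a - Finsupp.single i 1) 1 := by
        rw [monomial_mul, one_mul, add_tsub_cancel_of_le hle]
      have hdeg : mdeg (a - Finsupp.single i 1) = N - 1 := by
        have h1 : (a - Finsupp.single i 1) + Finsupp.single i 1 = a := tsub_add_cancel_of_le hle
        have h2 : mdeg (a - Finsupp.single i 1) + 1 = N := by
          rw [← ha]
          conv_rhs => rw [← h1]
          rw [mdeg_add, mdeg_single]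
        omega
      have hN1 : 1 ≤ N := by
        rw [← ha, mdeg_eq_sum]
        calc 1 ≤ a i := hi
        _ ≤ _ := Finset.single_le_sum (f := fun k => a k) (fun k _ => Nat.zero_le _)
            (Finset.mem_univ i)
      rw [hsplit, colon_mul_singleton]
      exact ih (N - 1) (by omega) _ hdeg _ (isPolymatroidal_colon_single I hI i)
end
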